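/- (RMIS third-order accuracy without the fourth-order condition.) Under the MIS/RMIS tableau setup, assume: (i) the inner table is second order, row-sum consistent, and has an explicit first stage, i.e. (b^I)^⊺𝟙 = 1, (b^I)^⊺c^I = 1/2, A^I 𝟙 = c^I, c^I_1 = 0, and the first row of A^I is zero; (ii) the outer table is explicit (A^O strictly lower triangular), row-sum consistent (A^O 𝟙_{s^O} = c^O), and third order, i.e. (b^O)^⊺𝟙 = 1, (b^O)^⊺c^O = 1/2, (b^O)^⊺((c^O)^2) = 1/3, and (b^O)^⊺A^O c^O = 1/6. Then all GARK order conditions through order three hold for the RMIS tableau: for every σ, ν ∈ {f, s}: (b^{{σ}})^⊺𝟙 = 1, (b^{{σ}})^⊺c^{{σ}} = 1/2, (b^{{σ}})^⊺((c^{{σ}})^2) = 1/3, and (b^{{σ}})^⊺A^{{σ,ν}}c^{{ν}} = 1/6. -/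

import Mathlib

open Matrix BigOperators Finset

/-- The increments `d_j = c^O_{j+1} - c^O_j` (with `d_{s^O} = 1 - c^O_{s^O}`). -/
noncomputable def misD (sO : ℕ) (cO : Fin sO → ℝ) (j : Fin sO) : ℝ :=
  if h : j.val + 1 < sO then cO ⟨j.val + 1, h⟩ - cO j else 1 - cO j

/-- The fast-fast GARK coefficient matrix `A^{f,f}` of the MIS/RMIS tableau. -/
noncomputable def misAff (sI sO : ℕ) (AI : Matrix (Fin sI) (Fin sI) ℝ)
    (bI : Fin sI → ℝ) (cO : Fin sO → ℝ) :
    Matrix (Fin sO × Fin sI) (Fin sO × Fin sI) ℝ :=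
  fun ip jq =>
    if jq.1 < ip.1 then misD sO cO jq.1 * bI jq.2
    else if jq.1 = ip.1 then misD sO cO ip.1 * AI ip.2 jq.2
    else 0

/-- The slow-fast GARK coefficient matrix `A^{s,f}` of the MIS/RMIS tableau. -/
noncomputable def misAsf (sI sO : ℕ) (bI : Fin sI → ℝ) (cO : Fin sO → ℝ) :
    Matrix (Fin sO) (Fin sO × Fin sI) ℝ :=
  fun i jq => if jq.1 < i then misD sO cO jq.1 * bI jq.2 else 0

/-- The fast-slow GARK coefficient matrix `A^{f,s}` of the MIS/RMIS tableau. -/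
noncomputable def misAfs (sI sO : ℕ) (cI : Fin sI → ℝ)
    (AO : Matrix (Fin sO) (Fin sO) ℝ) (bO : Fin sO → ℝ) :
    Matrix (Fin sO × Fin sI) (Fin sO) ℝ :=
  fun ip j =>
    if ip.1.val = 0 then
      (if h : 1 < sO then cI ip.2 * AO ⟨1, h⟩ j else 0)
    else if h : ip.1.val + 1 < sO then
      AO ip.1 j + cI ip.2 * (AO ⟨ip.1.val + 1, h⟩ j - AO ip.1 j)
    else
      AO ip.1 j + cI ip.2 * (bO j - AO ip.1 j)

/-- The fast abscissae `c^f` of the MIS/RMIS tableau. -/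
noncomputable def misCf (sI sO : ℕ) (cI : Fin sI → ℝ) (cO : Fin sO → ℝ) :
    Fin sO × Fin sI → ℝ :=
  fun ip => cO ip.1 + misD sO cO ip.1 * cI ip.2

/-- The RMIS fast weights `b^f` (i-th block is `b^O_i e_1`). -/
noncomputable def misBf (sI sO : ℕ) (bO : Fin sO → ℝ) : Fin sO × Fin sI → ℝ :=
  fun ip => if ip.2.val = 0 then bO ip.1 else 0

/-- The vector `v^O` appearing in the fourth-order RMIS condition. -/
noncomputable def misV (sO : ℕ) (bO cO : Fin sO → ℝ) (i : Fin sO) : ℝ :=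
  if i.val = 0 then 0
  else if h : i.val + 1 < sO then
    bO i * (cO i - cO ⟨i.val - 1, by have := i.isLt; omega⟩) +
      (cO ⟨i.val + 1, h⟩ - cO ⟨i.val - 1, by have := i.isLt; omega⟩) *
        ∑ j ∈ Finset.univ.filter (fun j => i < j), bO j
  else bO i * (cO i - cO ⟨i.val - 1, by have := i.isLt; omega⟩)

/-!
The RMIS weights `b^f` put the weight `b^O_i` on the first inner stage of block `i` and
nothing elsewhere, and that stage is explicit with `c^I_1 = 0`. So every `b^f`-weighted
condition only sees first rows: there `c^f` is `c^O`, `A^{f,s}` is `A^O` and `A^{f,f}` is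
`A^{s,f}`. The conditions thus reduce to those of the outer method together with
`A^{s,f} c^f = (c^O)^2 / 2`, which holds because the inner quadrature `b^I` integrates
linear functions exactly: row `i` of `A^{s,f} c^f` is `∑_{j<i} ∫_{c^O_j}^{c^O_{j+1}} t dt`.
-/

section RMIS

variable {sI sO : ℕ}

/-- The outer abscissae indexed by `ℕ`, extended by the endpoint `1` at `sO` (and beyond):
`misD` is their forward difference. -/
noncomputable def outerNode (cO : Fin sO → ℝ) (n : ℕ) : ℝ :=
  if h : n < sO then cO ⟨n, h⟩ else 1

lemma outerNode_val (cO : Fin sO → ℝ) (j : Fin sO) : outerNode cO j = cO j := by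
  simp [outerNode]

lemma add_misD (cO : Fin sO → ℝ) (j : Fin sO) :
    cO j + misD sO cO j = outerNode cO (j + 1) := by
  unfold misD outerNode
  split_ifs <;> ring

lemma sum_Iio_misD_telescope (cO : Fin sO → ℝ) (φ : ℝ → ℝ) (i : Fin sO) :
    ∑ j ∈ Iio i, (φ (cO j + misD sO cO j) - φ (cO j)) = φ (cO i) - φ (cO ⟨0, i.pos⟩) := by
  have hψ := sum_range_sub (fun n => φ (outerNode cO n)) i
  rw [← Nat.Iio_eq_range, ← Fin.map_valEmbedding_Iio, sum_map] at hψ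
  have h0 : outerNode cO 0 = cO ⟨0, i.pos⟩ := outerNode_val cO ⟨0, i.pos⟩
  simpa only [Fin.valEmbedding_apply, add_misD, outerNode_val, h0] using hψ

lemma misBf_dotProduct (h : 0 < sI) (bO : Fin sO → ℝ) (v : Fin sO × Fin sI → ℝ) :
    misBf sI sO bO ⬝ᵥ v = bO ⬝ᵥ fun i => v (i, ⟨0, h⟩) := by
  have hzero (q : Fin sI) : (q : ℕ) = 0 ↔ q = ⟨0, h⟩ := (Fin.ext_iff (b := ⟨0, h⟩)).symm
  simp only [dotProduct, Fintype.sum_prod_type, misBf, hzero, ite_mul, zero_mul,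
    sum_ite_eq', mem_univ, if_true]

lemma misCf_mk_zero (cI : Fin sI → ℝ) (cO : Fin sO → ℝ) (h : 0 < sI) (hcI : cI ⟨0, h⟩ = 0)
    (i : Fin sO) : misCf sI sO cI cO (i, ⟨0, h⟩) = cO i := by
  simp [misCf, hcI]

lemma misAff_mk_zero (AI : Matrix (Fin sI) (Fin sI) ℝ) (bI : Fin sI → ℝ) (cO : Fin sO → ℝ)
    (h : 0 < sI) (hAI : ∀ q, AI ⟨0, h⟩ q = 0) (i : Fin sO) :
    misAff sI sO AI bI cO (i, ⟨0, h⟩) = misAsf sI sO bI cO i := by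
  ext ⟨j, q⟩
  simp only [misAff, misAsf, hAI, mul_zero]
  split_ifs <;> rfl

lemma misAfs_mk_zero (cI : Fin sI → ℝ) (AO : Matrix (Fin sO) (Fin sO) ℝ) (bO : Fin sO → ℝ)
    (h : 0 < sI) (hcI : cI ⟨0, h⟩ = 0) (hAO : ∀ i j : Fin sO, i ≤ j → AO i j = 0)
    (i : Fin sO) : misAfs sI sO cI AO bO (i, ⟨0, h⟩) = AO i := by
  ext j
  simp only [misAfs, hcI, zero_mul, add_zero]
  split_ifs with hi
  · exact (hAO i j (by simp [Fin.le_def, hi])).symm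
  · rw [hAO i j (by simp [Fin.le_def, hi])]
  · rfl
  · rfl

lemma misAsf_mulVec (bI : Fin sI → ℝ) (cO : Fin sO → ℝ) (v : Fin sO × Fin sI → ℝ)
    (i : Fin sO) :
    (misAsf sI sO bI cO *ᵥ v) i = ∑ j ∈ Iio i, misD sO cO j * ∑ q, bI q * v (j, q) := by
  simp only [mulVec, dotProduct, misAsf, Fintype.sum_prod_type, ite_mul, zero_mul,
    sum_ite_irrel, sum_const_zero, mul_sum, mul_assoc]
  rw [← sum_filter, filter_gt_eq_Iio]

lemma sum_mul_misCf (bI cI : Fin sI → ℝ) (cO : Fin sO → ℝ) (hbI1 : ∑ q, bI q = 1)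
    (hbI2 : ∑ q, bI q * cI q = 1 / 2) (j : Fin sO) :
    ∑ q, bI q * misCf sI sO cI cO (j, q) = cO j + misD sO cO j / 2 := by
  simp only [misCf, mul_add, sum_add_distrib, ← sum_mul, hbI1, mul_left_comm _ (misD sO cO j),
    ← mul_sum, hbI2]
  ring

lemma misAsf_mulVec_misCf (bI cI : Fin sI → ℝ) (cO : Fin sO → ℝ) (hsO : 0 < sO)
    (hcO : cO ⟨0, hsO⟩ = 0) (hbI1 : ∑ q, bI q = 1) (hbI2 : ∑ q, bI q * cI q = 1 / 2) :
    misAsf sI sO bI cO *ᵥ misCf sI sO cI cO = fun i => cO i ^ 2 / 2 := by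
  ext i
  have hsq := sum_Iio_misD_telescope cO (fun x => x ^ 2 / 2) i
  rw [hcO] at hsq
  calc (misAsf sI sO bI cO *ᵥ misCf sI sO cI cO) i
      = ∑ j ∈ Iio i, misD sO cO j * (cO j + misD sO cO j / 2) := by
        simp only [misAsf_mulVec, sum_mul_misCf bI cI cO hbI1 hbI2]
    _ = ∑ j ∈ Iio i, ((cO j + misD sO cO j) ^ 2 / 2 - cO j ^ 2 / 2) :=
        sum_congr rfl fun j _ => by ring
    _ = cO i ^ 2 / 2 := by simpa using hsq

end RMIS

/-- With a second-order inner table (row-sum consistent, explicit first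
stage) and an explicit, row-sum consistent third-order outer table, all GARK order
conditions through order three hold for the RMIS tableau. -/
theorem rmis_third_order (sI sO : ℕ) (hsI : 1 ≤ sI) (hsO : 2 ≤ sO)
    (AI : Matrix (Fin sI) (Fin sI) ℝ) (bI cI : Fin sI → ℝ)
    (AO : Matrix (Fin sO) (Fin sO) ℝ) (bO cO : Fin sO → ℝ)
    (hcO1 : cO ⟨0, by omega⟩ = 0)
    -- (i) inner table: second order, row-sum consistent, explicit first stage
    (hbI1 : ∑ q, bI q = 1)
    (hbI2 : ∑ q, bI q * cI q = 1 / 2)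
    (hcI1 : cI ⟨0, by omega⟩ = 0)
    (hAI1 : ∀ q, AI ⟨0, by omega⟩ q = 0)
    -- (ii) outer table: explicit, row-sum consistent, third order
    (hAOexp : ∀ i j : Fin sO, i ≤ j → AO i j = 0)
    (hbO1 : ∑ i, bO i = 1)
    (hbO2 : ∑ i, bO i * cO i = 1 / 2)
    (hbO3 : ∑ i, bO i * (cO i) ^ 2 = 1 / 3)
    (hbO4 : bO ⬝ᵥ (AO *ᵥ cO) = 1 / 6) :
    let Bf := misBf sI sO bO
    let Cf := misCf sI sO cI cO
    let Aff := misAff sI sO AI bI cO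
    let Afs := misAfs sI sO cI AO bO
    let Asf := misAsf sI sO bI cO
    -- order 1
    ((∑ ip, Bf ip = 1) ∧ (∑ i, bO i = 1) ∧
    -- order 2
    (∑ ip, Bf ip * Cf ip = 1 / 2) ∧ (∑ i, bO i * cO i = 1 / 2) ∧
    -- order 3
    (∑ ip, Bf ip * (Cf ip) ^ 2 = 1 / 3) ∧ (∑ i, bO i * (cO i) ^ 2 = 1 / 3) ∧
    (Bf ⬝ᵥ (Aff *ᵥ Cf) = 1 / 6) ∧ (Bf ⬝ᵥ (Afs *ᵥ cO) = 1 / 6) ∧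
    (bO ⬝ᵥ (Asf *ᵥ Cf) = 1 / 6) ∧ (bO ⬝ᵥ (AO *ᵥ cO) = 1 / 6)) := by
  intro Bf Cf Aff Afs Asf
  have hCf : (fun i => Cf (i, ⟨0, hsI⟩)) = cO := funext (misCf_mk_zero cI cO hsI hcI1)
  have hAff : (fun i => (Aff *ᵥ Cf) (i, ⟨0, hsI⟩)) = Asf *ᵥ Cf :=
    funext fun i => congrArg (· ⬝ᵥ Cf) (misAff_mk_zero AI bI cO hsI hAI1 i)
  have hAfs : (fun i => (Afs *ᵥ cO) (i, ⟨0, hsI⟩)) = AO *ᵥ cO :=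
    funext fun i => congrArg (· ⬝ᵥ cO) (misAfs_mk_zero cI AO bO hsI hcI1 hAOexp i)
  have hAsf : bO ⬝ᵥ (Asf *ᵥ Cf) = 1 / 6 := by
    rw [misAsf_mulVec_misCf bI cI cO (by omega) hcO1 hbI1 hbI2]
    simp only [dotProduct, mul_div_assoc', ← sum_div, hbO3]
    norm_num
  refine ⟨?_, hbO1, ?_, hbO2, ?_, hbO3, ?_, ?_, hAsf, hbO4⟩
  · simpa [dotProduct, hbO1] using misBf_dotProduct hsI bO 1
  · rw [← hbO2, ← hCf]
    exact misBf_dotProduct hsI bO Cf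
  · rw [← hbO3, ← hCf]
    exact misBf_dotProduct hsI bO (fun ip => Cf ip ^ 2)
  · rw [misBf_dotProduct hsI, hAff, hAsf]
  · rw [misBf_dotProduct hsI, hAfs, hbO4]
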